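/- Assume (H1)–(H5). Then the unregularized dual problem min{F*(−ξ) : A*ξ ⪯ c} admits a unique solution ξ*, and the trajectory of minimizers ξ(t) of K_t converges to ξ* as t → +∞. -/

import Mathlib

open scoped BigOperators
open Filter

noncomputable section

variable {X Y : Type*}

/-- The marginal map `A`. -/
def margA [Fintype X] [Fintype Y] (γ : X × Y → ℝ) : (X → ℝ) × (Y → ℝ) :=
  (fun x => ∑ y, γ (x, y), fun y => ∑ x, γ (x, y))

/-- The adjoint map `A*`. -/
def adjA (ξ : (X → ℝ) × (Y → ℝ)) : X × Y → ℝ := fun p => ξ.1 p.1 + ξ.2 p.2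


/-- The adjoint map `A*` as a linear map. -/
def adjAlin (X Y : Type*) : ((X → ℝ) × (Y → ℝ)) →ₗ[ℝ] (X × Y → ℝ) where
  toFun ξ := fun p => ξ.1 p.1 + ξ.2 p.2
  map_add' u v := by
    funext p
    show (u.1 + v.1) p.1 + (u.2 + v.2) p.2 = _
    simp [Pi.add_apply]
    ring
  map_smul' a v := by
    funext p
    show (a • v.1) p.1 + (a • v.2) p.2 = _
    simp [Pi.smul_apply, smul_eq_mul]
    ring

/-- Inner product on `ℝ^{X×Y}`. -/
def dotP [Fintype X] [Fintype Y] (c γ : X × Y → ℝ) : ℝ := ∑ p, c p * γ p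

/-- Inner product on `ℝ^X ⊕ ℝ^Y`. -/
def dotE [Fintype X] [Fintype Y] (u v : (X → ℝ) × (Y → ℝ)) : ℝ :=
  ∑ x, u.1 x * v.1 x + ∑ y, u.2 y * v.2 y

/-- The discrete entropy. -/
def ent [Fintype X] [Fintype Y] (γ : X × Y → ℝ) : EReal :=
  if ∀ p, 0 ≤ γ p then (((∑ p, γ p * (Real.log (γ p) - 1)) : ℝ) : EReal) else ⊤

/-- Fenchel conjugate of an `EReal`-valued function. -/
def conj [Fintype X] [Fintype Y] (F : (X → ℝ) × (Y → ℝ) → EReal)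
    (ξ : (X → ℝ) × (Y → ℝ)) : EReal :=
  ⨆ v, ((dotE v ξ : ℝ) : EReal) - F v

/-- The regularized primal functional `C_t`. -/
def Ct [Fintype X] [Fintype Y] (F : (X → ℝ) × (Y → ℝ) → EReal) (c : X × Y → ℝ)
    (t : ℝ) (γ : X × Y → ℝ) : EReal :=
  ((dotP c γ : ℝ) : EReal) + F (margA γ) + ((1 / t : ℝ) : EReal) * ent γ

/-- The regularized dual functional `K_t` (`EReal`-valued version). -/
def KtE [Fintype X] [Fintype Y] (F : (X → ℝ) × (Y → ℝ) → EReal) (c : X × Y → ℝ)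
    (t : ℝ) (ξ : (X → ℝ) × (Y → ℝ)) : EReal :=
  conj F (-ξ) + (((1 / t) * ∑ p, Real.exp (t * (adjA ξ p - c p)) : ℝ) : EReal)

/-- The regularized dual functional `K_t` (real-valued version, for a real-valued `F*`). -/
def KtR [Fintype X] [Fintype Y] (Fs : (X → ℝ) × (Y → ℝ) → ℝ) (c : X × Y → ℝ)
    (t : ℝ) (ξ : (X → ℝ) × (Y → ℝ)) : ℝ :=
  Fs (-ξ) + (1 / t) * ∑ p, Real.exp (t * (adjA ξ p - c p))

/-- (H1): `F` proper, convex, lower semicontinuous. -/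
def H1 (F : (X → ℝ) × (Y → ℝ) → EReal) : Prop :=
  (∀ v, F v ≠ ⊥) ∧ (∃ v, F v ≠ ⊤) ∧
  (∀ v w : (X → ℝ) × (Y → ℝ), ∀ a b : ℝ, 0 ≤ a → 0 ≤ b → a + b = 1 →
    F (a • v + b • w) ≤ (a : EReal) * F v + (b : EReal) * F w) ∧
  LowerSemicontinuous F

/-- (H2): there is a strictly positive point in the domain of `F`. -/
def H2 (F : (X → ℝ) × (Y → ℝ) → EReal) : Prop :=
  ∃ v : (X → ℝ) × (Y → ℝ), (∀ x, 0 < v.1 x) ∧ (∀ y, 0 < v.2 y) ∧ F v ≠ ⊤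

/-- (H3): `F` is superlinear at infinity. -/
def H3 [Fintype X] [Fintype Y] (F : (X → ℝ) × (Y → ℝ) → EReal) : Prop :=
  ∀ M : ℝ, ∃ R : ℝ, ∀ v, R ≤ ‖v‖ → ((M * ‖v‖ : ℝ) : EReal) ≤ F v

/-- (H4): a neighborhood of the origin intersected with the nonnegative orthant
lies in the domain of `F`. -/
def H4 (F : (X → ℝ) × (Y → ℝ) → EReal) : Prop :=
  ∃ W ∈ nhds (0 : (X → ℝ) × (Y → ℝ)),
    ∀ v ∈ W, (∀ x, 0 ≤ v.1 x) → (∀ y, 0 ≤ v.2 y) → F v ≠ ⊤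

/-- (H5): strong convexity at every point (for the real-valued conjugate). -/
def H5 [Fintype X] [Fintype Y] (Fs : (X → ℝ) × (Y → ℝ) → ℝ) : Prop :=
  ∀ ξ₀ : (X → ℝ) × (Y → ℝ), ∃ r > (0 : ℝ), ∃ g : (X → ℝ) × (Y → ℝ), ∃ lam > (0 : ℝ),
    (∀ ξ, Fs ξ₀ + dotE g (ξ - ξ₀) ≤ Fs ξ) ∧
    (∀ ξ, ‖ξ - ξ₀‖ ≤ r → Fs ξ₀ + dotE g (ξ - ξ₀) + lam / 2 * ‖ξ - ξ₀‖ ^ 2 ≤ Fs ξ)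

/-- `Fs` is the (real-valued) Fenchel conjugate of `F`. -/
def IsConjOf [Fintype X] [Fintype Y] (F : (X → ℝ) × (Y → ℝ) → EReal)
    (Fs : (X → ℝ) × (Y → ℝ) → ℝ) : Prop :=
  ∀ ξ, (Fs ξ : EReal) = conj F ξ

end

/-! ### Auxiliary lemmas -/

section Aux

variable {X Y : Type*} [Fintype X] [Fintype Y]

lemma dotE_add_right (g u v : (X → ℝ) × (Y → ℝ)) :
    dotE g (u + v) = dotE g u + dotE g v := by
  simp only [dotE, Prod.fst_add, Prod.snd_add, Pi.add_apply, mul_add,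
    Finset.sum_add_distrib]
  ring

lemma dotE_smul_right (a : ℝ) (g v : (X → ℝ) × (Y → ℝ)) :
    dotE g (a • v) = a * dotE g v := by
  simp only [dotE, Prod.smul_fst, Prod.smul_snd, Pi.smul_apply, smul_eq_mul,
    Finset.mul_sum, mul_add]
  congr 1 <;> exact Finset.sum_congr rfl fun _ _ => by ring

lemma dotE_zero_right (g : (X → ℝ) × (Y → ℝ)) : dotE g 0 = 0 := by
  simp [dotE]

lemma dotE_neg_right (g v : (X → ℝ) × (Y → ℝ)) : dotE g (-v) = - dotE g v := by
  have := dotE_smul_right (-1 : ℝ) g v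
  simpa using this

lemma convexOn_of_H5 (Fs : (X → ℝ) × (Y → ℝ) → ℝ) (h5 : H5 Fs) :
    ConvexOn ℝ Set.univ Fs := by
  refine ⟨convex_univ, fun x _ y _ a b ha hb hab => ?_⟩
  obtain ⟨r, hr, g, lam, hlam, hsub, -⟩ := h5 (a • x + b • y)
  have h1 := hsub x
  have h2 := hsub y
  have key : a * dotE g (x - (a • x + b • y)) + b * dotE g (y - (a • x + b • y)) = 0 := by
    rw [← dotE_smul_right, ← dotE_smul_right, ← dotE_add_right]
    have hz : a • (x - (a • x + b • y)) + b • (y - (a • x + b • y))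
        = (1 - (a + b)) • (a • x + b • y) := by module
    rw [hz, hab]
    simp [dotE_zero_right]
  simp only [smul_eq_mul]
  have e3 : a * Fs (a • x + b • y) + b * Fs (a • x + b • y) = Fs (a • x + b • y) := by
    rw [← add_mul, hab, one_mul]
  linarith [mul_le_mul_of_nonneg_left h1 ha, mul_le_mul_of_nonneg_left h2 hb, key, e3]

lemma conj_ge (F : (X → ℝ) × (Y → ℝ) → EReal) (Fs : (X → ℝ) × (Y → ℝ) → ℝ)
    (hFs : IsConjOf F Fs) (hbot : ∀ v, F v ≠ ⊥)
    (v ξ : (X → ℝ) × (Y → ℝ)) (hv : F v ≠ ⊤) :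
    dotE v ξ - (F v).toReal ≤ Fs ξ := by
  have h2 : ((dotE v ξ : ℝ) : EReal) - F v ≤ conj F ξ :=
    le_iSup (fun w => ((dotE w ξ : ℝ) : EReal) - F w) v
  rw [← hFs ξ, ← EReal.coe_toReal hv (hbot v), ← EReal.coe_sub] at h2
  exact_mod_cast h2

omit [Fintype X] [Fintype Y] in
lemma isClosed_feas (c : X × Y → ℝ) :
    IsClosed {ξ : (X → ℝ) × (Y → ℝ) | ∀ p, adjA ξ p ≤ c p} := by
  have h : {ξ : (X → ℝ) × (Y → ℝ) | ∀ p, adjA ξ p ≤ c p}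
      = ⋂ p, {ξ : (X → ℝ) × (Y → ℝ) | adjA ξ p ≤ c p} := by
    ext ξ; simp
  rw [h]
  refine isClosed_iInter fun p => isClosed_le ?_ continuous_const
  exact ((continuous_apply p.1).comp continuous_fst).add
    ((continuous_apply p.2).comp continuous_snd)

lemma abs_fst_le_norm (ξ : (X → ℝ) × (Y → ℝ)) (x : X) : |ξ.1 x| ≤ ‖ξ‖ :=
  (norm_le_pi_norm ξ.1 x).trans (norm_fst_le ξ)

lemma abs_snd_le_norm (ξ : (X → ℝ) × (Y → ℝ)) (y : Y) : |ξ.2 y| ≤ ‖ξ‖ :=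
  (norm_le_pi_norm ξ.2 y).trans (norm_snd_le ξ)

lemma norm_le_of_components (ξ : (X → ℝ) × (Y → ℝ)) (R : ℝ) (hR : 0 ≤ R)
    (h1 : ∀ x, |ξ.1 x| ≤ R) (h2 : ∀ y, |ξ.2 y| ≤ R) : ‖ξ‖ ≤ R := by
  rw [Prod.norm_def]
  refine max_le ((pi_norm_le_iff_of_nonneg hR).2 fun x => ?_)
    ((pi_norm_le_iff_of_nonneg hR).2 fun y => ?_)
  · simpa [Real.norm_eq_abs] using h1 x
  · simpa [Real.norm_eq_abs] using h2 y

end Aux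

set_option maxHeartbeats 1600000 in
/-- under (H1)–(H5) the unregularized dual problem has a unique
solution `ξ*` and the dual trajectory `ξ(t)` converges to it as `t → +∞`. -/
theorem statement11 {X Y : Type*} [Fintype X] [Fintype Y] [Nonempty X] [Nonempty Y]
    (c : X × Y → ℝ) (hc : ∀ p, 0 ≤ c p)
    (F : (X → ℝ) × (Y → ℝ) → EReal) (Fs : (X → ℝ) × (Y → ℝ) → ℝ)
    (hF1 : H1 F) (hF2 : H2 F) (hF3 : H3 F) (hF4 : H4 F)
    (hFs : IsConjOf F Fs) (hF5 : H5 Fs)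
    (xi : ℝ → (X → ℝ) × (Y → ℝ))
    (hxi : ∀ t : ℝ, 0 < t → ∀ ζ, KtR Fs c t (xi t) ≤ KtR Fs c t ζ) :
    ∃ ξs : (X → ℝ) × (Y → ℝ),
      (∀ p, adjA ξs p ≤ c p) ∧
      (∀ ξ : (X → ℝ) × (Y → ℝ), (∀ p, adjA ξ p ≤ c p) → Fs (-ξs) ≤ Fs (-ξ)) ∧
      (∀ ξ' : (X → ℝ) × (Y → ℝ), (∀ p, adjA ξ' p ≤ c p) →
        (∀ ξ, (∀ p, adjA ξ p ≤ c p) → Fs (-ξ') ≤ Fs (-ξ)) → ξ' = ξs) ∧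
      Filter.Tendsto xi Filter.atTop (nhds ξs) := by
  classical
  obtain ⟨hFbot, -, -, -⟩ := hF1
  have hconv : ConvexOn ℝ Set.univ Fs := convexOn_of_H5 Fs hF5
  have hcont : Continuous Fs := by
    rw [← continuousOn_univ]; exact hconv.continuousOn isOpen_univ
  have hcontneg : Continuous fun ξ : (X → ℝ) × (Y → ℝ) => Fs (-ξ) :=
    hcont.comp continuous_neg
  -- the feasible set
  set Kf : Set ((X → ℝ) × (Y → ℝ)) := {ξ | ∀ p, adjA ξ p ≤ c p} with hKf
  have hKclosed : IsClosed Kf := isClosed_feas c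
  have h0K : (0 : (X → ℝ) × (Y → ℝ)) ∈ Kf := by
    intro p; simpa [adjA] using hc p
  -- linear lower bounds on Fs coming from H4
  obtain ⟨ε, hε, M, hlow, hlowX, hlowY⟩ : ∃ ε > (0:ℝ), ∃ M : ℝ,
      (∀ ξ, -M ≤ Fs ξ) ∧ (∀ ξ x, ε * ξ.1 x - M ≤ Fs ξ) ∧
      (∀ ξ y, ε * ξ.2 y - M ≤ Fs ξ) := by
    obtain ⟨W, hWnhds, hWdom⟩ := hF4
    obtain ⟨r, hr, hball⟩ := Metric.mem_nhds_iff.1 hWnhds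
    refine ⟨r/2, by positivity, ?_⟩
    set ε := r/2 with hεdef
    have hε : 0 < ε := by positivity
    set eX : X → (X → ℝ) × (Y → ℝ) :=
      fun x => (fun x' => if x' = x then ε else 0, 0) with heX
    set eY : Y → (X → ℝ) × (Y → ℝ) :=
      fun y => (0, fun y' => if y' = y then ε else 0) with heY
    have hnX : ∀ x, F (eX x) ≠ ⊤ := by
      intro x
      refine hWdom _ (hball ?_) (fun x' => by show 0 ≤ (if x' = x then ε else 0); split <;> simp [hε.le])
        (fun y => le_refl 0)
      rw [mem_ball_zero_iff]
      have : ‖eX x‖ ≤ ε := by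
        refine norm_le_of_components _ _ hε.le (fun x' => ?_) (fun y => by simp [heX, hε.le])
        show |(if x' = x then ε else 0)| ≤ ε; split <;> simp [hε.le, abs_of_nonneg]
      have : ε < r := by rw [hεdef]; linarith
      linarith [‹‖eX x‖ ≤ ε›]
    have hnY : ∀ y, F (eY y) ≠ ⊤ := by
      intro y
      refine hWdom _ (hball ?_) (fun x => le_refl 0)
        (fun y' => by show 0 ≤ (if y' = y then ε else 0); split <;> simp [hε.le])
      rw [mem_ball_zero_iff]
      have h1 : ‖eY y‖ ≤ ε := by
        refine norm_le_of_components _ _ hε.le (fun x => by simp [heY, hε.le]) (fun y' => ?_)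
        show |(if y' = y then ε else 0)| ≤ ε; split <;> simp [hε.le, abs_of_nonneg]
      have : ε < r := by rw [hεdef]; linarith
      linarith
    have hn0 : F 0 ≠ ⊤ := by
      refine hWdom _ (hball ?_) (fun x => le_refl 0) (fun y => le_refl 0)
      exact Metric.mem_ball_self hr
    have hdotX : ∀ x ξ, dotE (eX x) ξ = ε * ξ.1 x := by
      intro x ξ
      simp [dotE, heX, ite_mul, Finset.sum_ite_eq']
    have hdotY : ∀ y ξ, dotE (eY y) ξ = ε * ξ.2 y := by
      intro y ξ
      simp [dotE, heY, ite_mul, Finset.sum_ite_eq']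
    have hXne : (Finset.univ : Finset X).Nonempty := Finset.univ_nonempty
    have hYne : (Finset.univ : Finset Y).Nonempty := Finset.univ_nonempty
    set MX := Finset.univ.sup' hXne fun x => (F (eX x)).toReal with hMX
    set MY := Finset.univ.sup' hYne fun y => (F (eY y)).toReal with hMY
    refine ⟨max (max MX MY) (F 0).toReal, ?_, ?_, ?_⟩
    · intro ξ
      have h := conj_ge F Fs hFs hFbot 0 ξ hn0
      have h2 : dotE 0 ξ = 0 := by simp [dotE]
      have h3 : (F 0).toReal ≤ max (max MX MY) (F 0).toReal := le_max_right _ _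
      rw [h2] at h; linarith
    · intro ξ x
      have h := conj_ge F Fs hFs hFbot (eX x) ξ (hnX x)
      rw [hdotX] at h
      have h3 : (F (eX x)).toReal ≤ MX :=
        Finset.le_sup' (fun x => (F (eX x)).toReal) (Finset.mem_univ x)
      have h4 : MX ≤ max (max MX MY) (F 0).toReal :=
        le_max_of_le_left (le_max_left _ _)
      linarith
    · intro ξ y
      have h := conj_ge F Fs hFs hFbot (eY y) ξ (hnY y)
      rw [hdotY] at h
      have h3 : (F (eY y)).toReal ≤ MY :=
        Finset.le_sup' (fun y => (F (eY y)).toReal) (Finset.mem_univ y)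
      have h4 : MY ≤ max (max MX MY) (F 0).toReal :=
        le_max_of_le_left (le_max_right _ _)
      linarith
  -- max of the cost
  have hPne : (Finset.univ : Finset (X × Y)).Nonempty := Finset.univ_nonempty
  set Cmax := Finset.univ.sup' hPne c with hCmaxdef
  have hCc : ∀ p, c p ≤ Cmax := fun p => Finset.le_sup' c (Finset.mem_univ p)
  have hC0 : 0 ≤ Cmax := (hc (Classical.arbitrary _)).trans (hCc _)
  -- coercivity on almost-feasible sets
  have boundR : ∀ B : ℝ, ∃ R : ℝ, 0 ≤ R ∧ ∀ ξ : (X → ℝ) × (Y → ℝ),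
      (∀ p, adjA ξ p ≤ c p + 1) → Fs (-ξ) ≤ B → ‖ξ‖ ≤ R := by
    intro B
    set K := (|B| + |M|)/ε with hKdef
    have hK0 : 0 ≤ K := by positivity
    refine ⟨Cmax + 1 + K + K, by linarith, fun ξ hfeas hval => ?_⟩
    have hBM : (B + M)/ε ≤ K := by
      rw [hKdef]
      gcongr
      · exact le_abs_self B
      · exact le_abs_self M
    have hlb1 : ∀ x, -K ≤ ξ.1 x := by
      intro x
      have h := hlowX (-ξ) x
      simp only [Prod.fst_neg, Pi.neg_apply] at h
      have h2 : -(ξ.1 x) * ε ≤ B + M := by nlinarith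
      have h3 : -(ξ.1 x) ≤ (B + M)/ε := (le_div_iff₀ hε).2 h2
      linarith
    have hlb2 : ∀ y, -K ≤ ξ.2 y := by
      intro y
      have h := hlowY (-ξ) y
      simp only [Prod.snd_neg, Pi.neg_apply] at h
      have h2 : -(ξ.2 y) * ε ≤ B + M := by nlinarith
      have h3 : -(ξ.2 y) ≤ (B + M)/ε := (le_div_iff₀ hε).2 h2
      linarith
    have hub1 : ∀ x, ξ.1 x ≤ Cmax + 1 + K := by
      intro x
      have h := hfeas (x, Classical.arbitrary Y)
      have h2 := hlb2 (Classical.arbitrary Y)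
      have h3 := hCc (x, Classical.arbitrary Y)
      simp only [adjA] at h
      linarith
    have hub2 : ∀ y, ξ.2 y ≤ Cmax + 1 + K := by
      intro y
      have h := hfeas (Classical.arbitrary X, y)
      have h2 := hlb1 (Classical.arbitrary X)
      have h3 := hCc (Classical.arbitrary X, y)
      simp only [adjA] at h
      linarith
    refine norm_le_of_components _ _ (by linarith) (fun x => abs_le.2 ⟨?_, ?_⟩)
      (fun y => abs_le.2 ⟨?_, ?_⟩)
    · linarith [hlb1 x]
    · linarith [hub1 x]
    · linarith [hlb2 y]
    · linarith [hub2 y]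
  -- existence of a minimizer on the feasible set
  obtain ⟨ξs, hfeas_s, hminK⟩ : ∃ ξs ∈ Kf, ∀ ξ ∈ Kf, Fs (-ξs) ≤ Fs (-ξ) := by
    obtain ⟨R₀, hR₀, hball₀⟩ := boundR (Fs 0)
    have hcomp : IsCompact (Kf ∩ Metric.closedBall 0 R₀) :=
      (isCompact_closedBall (0 : (X → ℝ) × (Y → ℝ)) R₀).inter_left hKclosed
    have hne : (Kf ∩ Metric.closedBall 0 R₀).Nonempty :=
      ⟨0, h0K, by simpa [Metric.mem_closedBall] using hR₀⟩
    obtain ⟨ξs, hξsS, hmin⟩ := hcomp.exists_isMinOn hne hcontneg.continuousOn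
    rw [isMinOn_iff] at hmin
    refine ⟨ξs, hξsS.1, fun ξ hξ => ?_⟩
    by_cases hR : ‖ξ‖ ≤ R₀
    · exact hmin ξ ⟨hξ, by simpa [Metric.mem_closedBall, dist_eq_norm] using hR⟩
    · have h1 : ¬ Fs (-ξ) ≤ Fs 0 := fun hle =>
        hR (hball₀ ξ (fun p => (hξ p).trans (by linarith)) hle)
      have h2 : Fs (-ξs) ≤ Fs 0 := by
        have := hmin 0 ⟨h0K, by simpa [Metric.mem_closedBall] using hR₀⟩
        simpa using this
      linarith [not_le.1 h1]
  set m := Fs (-ξs) with hmdef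
  -- strict minimality (uniqueness)
  have hstrict : ∀ ξ ∈ Kf, ξ ≠ ξs → m < Fs (-ξ) := by
    intro ξ hξ hne
    by_contra hcon
    have hle : Fs (-ξ) ≤ m := not_lt.1 hcon
    set u := ξs - ξ with hu
    have hune : u ≠ 0 := sub_ne_zero_of_ne (Ne.symm hne)
    have hupos : 0 < ‖u‖ := norm_pos_iff.2 hune
    set μ := (1/2 : ℝ) • (ξs + ξ) with hμ
    have hμK : μ ∈ Kf := by
      intro p
      have h1 := hfeas_s p
      have h2 := hξ p
      simp only [adjA, hμ, Prod.smul_fst, Prod.smul_snd, Prod.fst_add, Prod.snd_add,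
        Pi.smul_apply, Pi.add_apply, smul_eq_mul] at *
      linarith
    obtain ⟨r, hr, g, lam, hlam, hsub, hstrong⟩ := hF5 (-μ)
    set τ := min (1/2 : ℝ) (r / ‖u‖) with hτ
    have hτpos : 0 < τ := lt_min (by norm_num) (div_pos hr hupos)
    have hτhalf : τ ≤ 1/2 := min_le_left _ _
    have hτr : τ * ‖u‖ ≤ r := by
      have : τ ≤ r / ‖u‖ := min_le_right _ _
      calc τ * ‖u‖ ≤ (r / ‖u‖) * ‖u‖ := by nlinarith
        _ = r := div_mul_cancel₀ r hupos.ne'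
    have hnorm_tu : ‖τ • u‖ = τ * ‖u‖ := by
      rw [norm_smul, Real.norm_eq_abs, abs_of_pos hτpos]
    -- the two perturbed points
    have hdiff1 : (-μ + τ • u) - (-μ) = τ • u := by abel
    have hdiff2 : (-μ - τ • u) - (-μ) = -(τ • u) := by abel
    have hs1 := hstrong (-μ + τ • u) (by rw [hdiff1, hnorm_tu]; exact hτr)
    have hs2 := hstrong (-μ - τ • u) (by rw [hdiff2, norm_neg, hnorm_tu]; exact hτr)
    rw [hdiff1] at hs1
    rw [hdiff2, dotE_neg_right, norm_neg] at hs2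
    have hμm : m ≤ Fs (-μ) := hminK μ hμK
    -- convexity upper bounds
    have hid1 : -μ + τ • u = (1/2 - τ) • (-ξs) + (1/2 + τ) • (-ξ) := by
      rw [hμ, hu]; module
    have hid2 : -μ - τ • u = (1/2 + τ) • (-ξs) + (1/2 - τ) • (-ξ) := by
      rw [hμ, hu]; module
    have hup1 : Fs (-μ + τ • u) ≤ (1/2 - τ) * m + (1/2 + τ) * Fs (-ξ) := by
      have := hconv.2 (Set.mem_univ (-ξs)) (Set.mem_univ (-ξ))
        (by linarith : (0:ℝ) ≤ 1/2 - τ) (by linarith : (0:ℝ) ≤ 1/2 + τ) (by ring)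
      rw [← hid1] at this
      simpa [smul_eq_mul, hmdef] using this
    have hup2 : Fs (-μ - τ • u) ≤ (1/2 + τ) * m + (1/2 - τ) * Fs (-ξ) := by
      have := hconv.2 (Set.mem_univ (-ξs)) (Set.mem_univ (-ξ))
        (by linarith : (0:ℝ) ≤ 1/2 + τ) (by linarith : (0:ℝ) ≤ 1/2 - τ) (by ring)
      rw [← hid2] at this
      simpa [smul_eq_mul, hmdef] using this
    have hq : 0 < lam / 2 * ‖τ • u‖ ^ 2 := by
      rw [hnorm_tu]; positivity
    nlinarith [hs1, hs2, hup1, hup2, hμm, hq, hle]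
  -- quantitative stability
  have hstab : ∀ η : ℝ, 0 < η → ∀ R' : ℝ, ∃ ρ > (0:ℝ), ∀ ξ ∈ Kf,
      ‖ξ‖ ≤ R' → Fs (-ξ) ≤ m + ρ → ‖ξ - ξs‖ < η := by
    intro η hη R'
    set S := (Kf ∩ {ξ | η ≤ ‖ξ - ξs‖}) ∩ Metric.closedBall 0 R' with hS
    have hScomp : IsCompact S :=
      (isCompact_closedBall (0 : (X → ℝ) × (Y → ℝ)) R').inter_left
        (hKclosed.inter (isClosed_le continuous_const
          ((continuous_id.sub continuous_const).norm)))
    by_cases hSne : S.Nonempty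
    · obtain ⟨ξ₁, hξ₁S, hmin₁⟩ := hScomp.exists_isMinOn hSne hcontneg.continuousOn
      rw [isMinOn_iff] at hmin₁
      have hξ₁ne : ξ₁ ≠ ξs := by
        intro heq
        have := hξ₁S.1.2
        rw [heq] at this
        simp only [Set.mem_setOf_eq, sub_self, norm_zero] at this
        linarith
      have h1 : m < Fs (-ξ₁) := hstrict ξ₁ hξ₁S.1.1 hξ₁ne
      refine ⟨(Fs (-ξ₁) - m)/2, by linarith, fun ξ hξK hξR hξv => ?_⟩
      by_contra hcon
      have hmem : ξ ∈ S :=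
        ⟨⟨hξK, not_lt.1 hcon⟩, by simpa [Metric.mem_closedBall, dist_eq_norm] using hξR⟩
      have := hmin₁ ξ hmem
      linarith
    · refine ⟨1, one_pos, fun ξ hξK hξR hξv => ?_⟩
      by_contra hcon
      exact hSne ⟨ξ, ⟨⟨hξK, not_lt.1 hcon⟩,
        by simpa [Metric.mem_closedBall, dist_eq_norm] using hξR⟩⟩
  -- trajectory estimates
  set N := (Fintype.card (X × Y) : ℝ) with hN
  have hN0 : 0 < N := by
    rw [hN]; exact_mod_cast Fintype.card_pos
  have h_upper : ∀ t : ℝ, 1 ≤ t → KtR Fs c t (xi t) ≤ m + N / t := by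
    intro t ht
    have ht0 : 0 < t := by linarith
    refine (hxi t ht0 ξs).trans ?_
    show Fs (-ξs) + (1/t) * ∑ p, Real.exp (t * (adjA ξs p - c p)) ≤ m + N / t
    have hsum : ∑ p, Real.exp (t * (adjA ξs p - c p)) ≤ N := by
      have hone : ∀ p ∈ Finset.univ, Real.exp (t * (adjA ξs p - c p)) ≤ 1 := fun p _ =>
        Real.exp_le_one_iff.2 (mul_nonpos_iff.2 (Or.inl ⟨ht0.le, sub_nonpos.2 (hfeas_s p)⟩))
      calc ∑ p, Real.exp (t * (adjA ξs p - c p)) ≤ ∑ _p : X × Y, (1:ℝ) :=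
            Finset.sum_le_sum hone
        _ = N := by simp [hN, Finset.card_univ]
    have h2 : (1/t) * (∑ p, Real.exp (t * (adjA ξs p - c p))) ≤ (1/t) * N :=
      mul_le_mul_of_nonneg_left hsum (by positivity)
    have h3 : (1/t) * N = N / t := by ring
    rw [hmdef]
    linarith
  have h_Fs_up : ∀ t : ℝ, 1 ≤ t → Fs (-(xi t)) ≤ m + N / t := by
    intro t ht
    have ht0 : 0 < t := by linarith
    have h := h_upper t ht
    have hKt : KtR Fs c t (xi t)
        = Fs (-(xi t)) + (1/t) * ∑ p, Real.exp (t * (adjA (xi t) p - c p)) := rfl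
    have hpen : 0 ≤ (1/t) * ∑ p, Real.exp (t * (adjA (xi t) p - c p)) := by positivity
    rw [hKt] at h; linarith
  set B := max (m + N + M) 1 with hBdef
  have hB0 : 0 < B := lt_of_lt_of_le one_pos (le_max_right _ _)
  have h_pen : ∀ t : ℝ, 1 ≤ t →
      (1/t) * ∑ p, Real.exp (t * (adjA (xi t) p - c p)) ≤ B := by
    intro t ht
    have ht0 : 0 < t := by linarith
    have h := h_upper t ht
    have hKt : KtR Fs c t (xi t)
        = Fs (-(xi t)) + (1/t) * ∑ p, Real.exp (t * (adjA (xi t) p - c p)) := rfl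
    have hl := hlow (-(xi t))
    have hNt : N / t ≤ N := div_le_self hN0.le ht
    rw [hKt] at h
    have hmB : m + N + M ≤ B := le_max_left _ _
    linarith
  have h_almost : ∀ t : ℝ, 1 ≤ t → ∀ p, adjA (xi t) p ≤ c p + Real.log (t * B) / t := by
    intro t ht p
    have ht0 : 0 < t := by linarith
    have hterm : Real.exp (t * (adjA (xi t) p - c p))
        ≤ ∑ q, Real.exp (t * (adjA (xi t) q - c q)) :=
      Finset.single_le_sum (f := fun q => Real.exp (t * (adjA (xi t) q - c q)))
        (fun q _ => (Real.exp_pos _).le) (Finset.mem_univ p)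
    have hsum : ∑ q, Real.exp (t * (adjA (xi t) q - c q)) ≤ t * B := by
      have hp := h_pen t ht
      have hS : ∑ q, Real.exp (t * (adjA (xi t) q - c q))
          = t * ((1/t) * ∑ q, Real.exp (t * (adjA (xi t) q - c q))) := by
        field_simp
      rw [hS]
      exact mul_le_mul_of_nonneg_left hp ht0.le
    have hlog : t * (adjA (xi t) p - c p) ≤ Real.log (t * B) := by
      have h1 : Real.exp (t * (adjA (xi t) p - c p)) ≤ t * B := hterm.trans hsum
      have h2 := Real.log_le_log (Real.exp_pos _) h1
      rwa [Real.log_exp] at h2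
    have h2 : adjA (xi t) p - c p ≤ Real.log (t * B) / t := by
      rw [le_div_iff₀ ht0]
      nlinarith [hlog]
    linarith
  set δ : ℝ → ℝ := fun t => max (Real.log (t * B) / t) 0 with hδdef
  have hδnn : ∀ t, 0 ≤ δ t := fun t => le_max_right _ _
  have hδtend : Filter.Tendsto δ Filter.atTop (nhds 0) := by
    have h1 : Filter.Tendsto (fun t : ℝ => Real.log (t * B) / t) Filter.atTop (nhds 0) := by
      have h2 : Filter.Tendsto (fun t : ℝ => Real.log t / t) Filter.atTop (nhds 0) :=
        Real.isLittleO_log_id_atTop.tendsto_div_nhds_zero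
      have h3 : Filter.Tendsto (fun t : ℝ => Real.log B / t) Filter.atTop (nhds 0) :=
        tendsto_const_nhds.div_atTop Filter.tendsto_id
      have h4 := h2.add h3
      rw [add_zero] at h4
      apply h4.congr'
      filter_upwards [Filter.eventually_gt_atTop 0] with t ht
      rw [Real.log_mul ht.ne' hB0.ne']
      ring
    have h5 := h1.max (tendsto_const_nhds (x := (0:ℝ)))
    simpa using h5
  obtain ⟨R, hR0, hRb⟩ := boundR (m + N)
  have h_normxi : ∀ t, 1 ≤ t → δ t ≤ 1 → ‖xi t‖ ≤ R := by
    intro t ht hδ1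
    apply hRb
    · intro p
      have h1 := h_almost t ht p
      have h2 : Real.log (t * B) / t ≤ δ t := le_max_left _ _
      linarith
    · have h1 := h_Fs_up t ht
      have h2 : N / t ≤ N := div_le_self hN0.le ht
      linarith
  set e : (X → ℝ) × (Y → ℝ) := (fun _ => (1:ℝ), 0) with hedef
  have he1 : ‖e‖ ≤ 1 :=
    norm_le_of_components _ _ zero_le_one (fun x => by simp [hedef]) (fun y => by simp [hedef])
  obtain ⟨w₁, hw₁, hmax₁⟩ := (isCompact_closedBall (0 : (X → ℝ) × (Y → ℝ)) (R+2)).exists_isMaxOn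
    ⟨0, by rw [Metric.mem_closedBall, dist_self]; linarith⟩ hcont.continuousOn
  obtain ⟨w₂, hw₂, hmin₂⟩ := (isCompact_closedBall (0 : (X → ℝ) × (Y → ℝ)) (R+2)).exists_isMinOn
    ⟨0, by rw [Metric.mem_closedBall, dist_self]; linarith⟩ hcont.continuousOn
  rw [isMaxOn_iff] at hmax₁
  rw [isMinOn_iff] at hmin₂
  set L := Fs w₁ - Fs w₂ with hLdef
  have hL0 : 0 ≤ L := by
    have := hmax₁ w₂ hw₂
    rw [hLdef]; linarith
  have h_shift : ∀ t, 1 ≤ t → δ t ≤ 1 →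
      Fs (-(xi t) + δ t • e) ≤ Fs (-(xi t)) + δ t * L := by
    intro t ht hδ1
    have hxiR := h_normxi t ht hδ1
    have hmem1 : -(xi t) ∈ Metric.closedBall (0 : (X → ℝ) × (Y → ℝ)) (R+2) := by
      rw [Metric.mem_closedBall, dist_zero_right, norm_neg]; linarith
    have hmem2 : -(xi t) + e ∈ Metric.closedBall (0 : (X → ℝ) × (Y → ℝ)) (R+2) := by
      rw [Metric.mem_closedBall, dist_zero_right]
      have h1 := norm_add_le (-(xi t)) e
      rw [norm_neg] at h1
      linarith
    have hid : (1 - δ t) • (-(xi t)) + δ t • (-(xi t) + e) = -(xi t) + δ t • e := by module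
    have hcv := hconv.2 (Set.mem_univ (-(xi t))) (Set.mem_univ (-(xi t) + e))
      (by linarith : (0:ℝ) ≤ 1 - δ t) (hδnn t) (by ring)
    rw [hid] at hcv
    simp only [smul_eq_mul] at hcv
    have hFup : Fs (-(xi t) + e) ≤ Fs w₁ := hmax₁ _ hmem2
    have hFdn : Fs w₂ ≤ Fs (-(xi t)) := hmin₂ _ hmem1
    have hmul : δ t * Fs (-(xi t) + e) ≤ δ t * (Fs (-(xi t)) + L) := by
      apply mul_le_mul_of_nonneg_left _ (hδnn t)
      rw [hLdef]; linarith
    nlinarith [hcv, hmul, hδnn t]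
  refine ⟨ξs, hfeas_s, fun ξ hξ => hminK ξ hξ, ?_, ?_⟩
  · intro ξ' hξ'feas hξ'min
    by_contra hne
    have h1 := hstrict ξ' hξ'feas hne
    have h2 := hξ'min ξs hfeas_s
    rw [hmdef] at h1
    linarith
  · rw [Metric.tendsto_atTop]
    intro η hη
    obtain ⟨ρ, hρ, hst⟩ := hstab (η/2) (by linarith) (R+1)
    have hev1 : ∀ᶠ t : ℝ in Filter.atTop, δ t < min 1 (η/2) :=
      hδtend.eventually (eventually_lt_nhds (lt_min one_pos (by linarith)))
    have hev2 : ∀ᶠ t : ℝ in Filter.atTop, N / t + δ t * L < ρ := by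
      have h1 : Filter.Tendsto (fun t : ℝ => N / t + δ t * L) Filter.atTop (nhds 0) := by
        have h2 : Filter.Tendsto (fun t : ℝ => N / t) Filter.atTop (nhds 0) :=
          tendsto_const_nhds.div_atTop Filter.tendsto_id
        have h3 := hδtend.mul_const L
        have h4 := h2.add h3
        simpa using h4
      exact h1.eventually (eventually_lt_nhds hρ)
    have hev3 : ∀ᶠ t : ℝ in Filter.atTop, (1:ℝ) ≤ t := Filter.eventually_ge_atTop 1
    obtain ⟨T, hT⟩ := Filter.eventually_atTop.1 ((hev1.and hev2).and hev3)
    refine ⟨T, fun t htT => ?_⟩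
    obtain ⟨⟨hd1, hd2⟩, ht1⟩ := hT t htT
    have hδ1 : δ t ≤ 1 := le_of_lt (lt_of_lt_of_le hd1 (min_le_left _ _))
    have hδη : δ t ≤ η/2 := le_of_lt (lt_of_lt_of_le hd1 (min_le_right _ _))
    set ξt := xi t - δ t • e with hξtdef
    have hnegξt : -ξt = -(xi t) + δ t • e := by rw [hξtdef]; module
    have hfeast : ξt ∈ Kf := by
      intro p
      have h := h_almost t ht1 p
      have hcomp : adjA ξt p = adjA (xi t) p - δ t := by
        simp only [hξtdef, adjA, Prod.fst_sub, Prod.snd_sub, Pi.sub_apply,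
          Prod.smul_fst, Prod.smul_snd, Pi.smul_apply, smul_eq_mul, hedef, Pi.zero_apply]
        ring
      rw [hcomp]
      have h2 : Real.log (t * B) / t ≤ δ t := le_max_left _ _
      linarith
    have hδe : ‖δ t • e‖ ≤ δ t := by
      rw [norm_smul, Real.norm_eq_abs, abs_of_nonneg (hδnn t)]
      nlinarith [he1, hδnn t]
    have hnormt : ‖ξt‖ ≤ R + 1 := by
      rw [hξtdef]
      refine (norm_sub_le _ _).trans ?_
      have h1 := h_normxi t ht1 hδ1
      linarith
    have hvalt : Fs (-ξt) ≤ m + ρ := by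
      rw [hnegξt]
      have h1 := h_shift t ht1 hδ1
      have h2 := h_Fs_up t ht1
      have h3 : Fs (-xi t) + δ t * L ≤ m + N / t + δ t * L := by linarith [h2]
      have h4 : m + N / t + δ t * L ≤ m + ρ := by linarith [hd2]
      exact (h1.trans h3).trans h4
    have hclose := hst ξt hfeast hnormt hvalt
    have hdist : dist (xi t) ξs ≤ dist (xi t) ξt + dist ξt ξs := dist_triangle _ _ _
    have hd3 : dist (xi t) ξt ≤ η/2 := by
      rw [dist_eq_norm, hξtdef]
      have h1 : xi t - (xi t - δ t • e) = δ t • e := by module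
      rw [h1]
      linarith
    have hd4 : dist ξt ξs < η/2 := by rw [dist_eq_norm]; exact hclose
    linarith
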